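/- A measure-preserving transformation f of a probability space is ergodic if and only if f belongs to ⋂ G(φ, a, ε), where φ ranges over a countable dense subset D of C⁰(M,ℝ), a over the rationals, and ε over positive rationals; here G(φ, a, ε) is the set of f such that either m[φ_f ≥ a] ≥ 1−ε or m[φ_f ≤ a] ≥ 1−ε. -/

import Mathlib

open MeasureTheory Filter
open scoped ENNReal

/-- The set where the Birkhoff average of `φ` under `f` exists and is at least `a`. -/
def birkhoffGe {M : Type*} (f : M → M) (φ : M → ℝ) (a : ℝ) : Set M :=
  {x | ∃ L : ℝ, a ≤ L ∧
    Tendsto (fun n : ℕ => (1 / (n : ℝ)) * ∑ j ∈ Finset.range n, φ (f^[j] x))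
      atTop (nhds L)}

/-- The set where the Birkhoff average of `φ` under `f` exists and is at most `a`. -/
def birkhoffLe {M : Type*} (f : M → M) (φ : M → ℝ) (a : ℝ) : Set M :=
  {x | ∃ L : ℝ, L ≤ a ∧
    Tendsto (fun n : ℕ => (1 / (n : ℝ)) * ∑ j ∈ Finset.range n, φ (f^[j] x))
      atTop (nhds L)}

/-!
If `f` is ergodic, the pointwise ergodic theorem for bounded observables, a consequence of
Garsia's maximal inequality, gives `φ_f = ∫ φ dm` a.e., so `[φ_f ≥ a]` or `[φ_f ≤ a]` has full
measure. Conversely, if `f` lies in every `G(φ, a, ε)`, then for each `φ ∈ D` one of these sets is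
conull for every rational `a`, so `φ_f` exists and equals a constant `c` a.e.; integrating the
averages over an invariant set `s` gives `∫_s φ = m(s) c = m(s) ∫ φ`. By density this holds for
every continuous `φ`, hence `m|_s = m(s) m`, and evaluating at `s` gives `m(s) = m(s)²`.
-/

open Topology

theorem Filter.limsup_eq_limsup_of_tendsto_sub {u v : ℕ → ℝ}
    (hu : IsBoundedUnder (· ≤ ·) atTop u) (hu' : IsBoundedUnder (· ≥ ·) atTop u)
    (hv : IsBoundedUnder (· ≤ ·) atTop v) (hv' : IsBoundedUnder (· ≥ ·) atTop v)
    (h : Tendsto (u - v) atTop (𝓝 0)) :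
    limsup u atTop = limsup v atTop := by
  have key {u v : ℕ → ℝ} (hv : IsBoundedUnder (· ≤ ·) atTop v)
      (hv' : IsBoundedUnder (· ≥ ·) atTop v) (h : Tendsto (u - v) atTop (𝓝 0)) :
      limsup u atTop ≤ limsup v atTop :=
    calc limsup u atTop = limsup (v + (u - v)) atTop := by rw [add_sub_cancel]
      _ ≤ limsup v atTop + limsup (u - v) atTop :=
        limsup_add_le hv' hv h.isCoboundedUnder_le h.isBoundedUnder_le
      _ = limsup v atTop := by rw [h.limsup_eq, add_zero]
  exact (key hv hv' h).antisymm (key hu hu' (by simpa [Pi.sub_def] using h.neg))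

section BirkhoffAverage

variable {α : Type*} {f : α → α} {φ : α → ℝ} {C : ℝ}

theorem birkhoffGe_eq (f : α → α) (φ : α → ℝ) (a : ℝ) :
    birkhoffGe f φ a =
      {x | ∃ L, a ≤ L ∧ Tendsto (birkhoffAverage ℝ f φ · x) atTop (𝓝 L)} := by
  simp only [birkhoffGe, birkhoffAverage, birkhoffSum, one_div, smul_eq_mul]

theorem birkhoffLe_eq (f : α → α) (φ : α → ℝ) (a : ℝ) :
    birkhoffLe f φ a =
      {x | ∃ L, L ≤ a ∧ Tendsto (birkhoffAverage ℝ f φ · x) atTop (𝓝 L)} := by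
  simp only [birkhoffLe, birkhoffAverage, birkhoffSum, one_div, smul_eq_mul]

theorem birkhoffGe_eq_inter (f : α → α) (φ : α → ℝ) (a : ℝ) :
    birkhoffGe f φ a = {x | ∃ L, Tendsto (birkhoffAverage ℝ f φ · x) atTop (𝓝 L)} ∩
      {x | a ≤ limsup (birkhoffAverage ℝ f φ · x) atTop} := by
  ext x
  rw [birkhoffGe_eq]
  constructor
  · rintro ⟨L, haL, hL⟩
    exact ⟨⟨L, hL⟩, by simpa [hL.limsup_eq] using haL⟩
  · rintro ⟨⟨L, hL⟩, ha⟩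
    exact ⟨L, by simpa [hL.limsup_eq] using ha, hL⟩

theorem birkhoffLe_eq_inter (f : α → α) (φ : α → ℝ) (a : ℝ) :
    birkhoffLe f φ a = {x | ∃ L, Tendsto (birkhoffAverage ℝ f φ · x) atTop (𝓝 L)} ∩
      {x | limsup (birkhoffAverage ℝ f φ · x) atTop ≤ a} := by
  ext x
  rw [birkhoffLe_eq]
  constructor
  · rintro ⟨L, haL, hL⟩
    exact ⟨⟨L, hL⟩, by simpa [hL.limsup_eq] using haL⟩
  · rintro ⟨⟨L, hL⟩, ha⟩
    exact ⟨L, by simpa [hL.limsup_eq] using ha, hL⟩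

theorem abs_birkhoffAverage_le (hC : ∀ x, |φ x| ≤ C) (n : ℕ) (x : α) :
    |birkhoffAverage ℝ f φ n x| ≤ C := by
  rcases n.eq_zero_or_pos with rfl | hn
  · simpa using (abs_nonneg _).trans (hC x)
  rw [birkhoffAverage, smul_eq_mul, abs_mul, abs_inv, Nat.abs_cast,
    inv_mul_le_iff₀ (by positivity)]
  calc |birkhoffSum f φ n x| ≤ ∑ k ∈ Finset.range n, |φ (f^[k] x)| :=
        Finset.abs_sum_le_sum_abs _ _
    _ ≤ ∑ _k ∈ Finset.range n, C := Finset.sum_le_sum fun k _ => hC (f^[k] x)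
    _ = n * C := by simp

theorem isBoundedUnder_le_birkhoffAverage (hC : ∀ x, |φ x| ≤ C) (x : α) :
    IsBoundedUnder (· ≤ ·) atTop (birkhoffAverage ℝ f φ · x) :=
  isBoundedUnder_of ⟨C, fun n => (abs_le.1 (abs_birkhoffAverage_le hC n x)).2⟩

theorem isBoundedUnder_ge_birkhoffAverage (hC : ∀ x, |φ x| ≤ C) (x : α) :
    IsBoundedUnder (· ≥ ·) atTop (birkhoffAverage ℝ f φ · x) :=
  isBoundedUnder_of ⟨-C, fun n => (abs_le.1 (abs_birkhoffAverage_le hC n x)).1⟩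

theorem limsup_birkhoffAverage_apply (hC : ∀ x, |φ x| ≤ C) (x : α) :
    limsup (birkhoffAverage ℝ f φ · (f x)) atTop =
      limsup (birkhoffAverage ℝ f φ · x) atTop := by
  have hφ : Bornology.IsBounded (Set.range φ) :=
    isBounded_iff_forall_norm_le.2 ⟨C, by rintro _ ⟨y, rfl⟩; exact hC y⟩
  exact limsup_eq_limsup_of_tendsto_sub (isBoundedUnder_le_birkhoffAverage hC _)
    (isBoundedUnder_ge_birkhoffAverage hC _) (isBoundedUnder_le_birkhoffAverage hC _)
    (isBoundedUnder_ge_birkhoffAverage hC _)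
    (tendsto_birkhoffAverage_apply_sub_birkhoffAverage' ℝ hφ f x)

theorem exists_birkhoffSum_sub_pos_of_lt_limsup (hC : ∀ x, |φ x| ≤ C) {x : α} {t : ℝ}
    (ht : t < limsup (birkhoffAverage ℝ f φ · x) atTop) :
    ∃ n, 0 < birkhoffSum f (fun y => φ y - t) n x := by
  obtain ⟨n, htn, hn⟩ := ((frequently_lt_of_lt_limsup
    (isBoundedUnder_ge_birkhoffAverage hC x).isCoboundedUnder_le ht).and_eventually
    (eventually_gt_atTop 0)).exists
  rw [birkhoffAverage, smul_eq_mul, lt_inv_mul_iff₀ (by positivity)] at htn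
  refine ⟨n, ?_⟩
  simpa [birkhoffSum, Finset.sum_sub_distrib] using htn

variable [MeasurableSpace α]

theorem measurable_birkhoffSum (hf : Measurable f) (hφ : Measurable φ) (n : ℕ) :
    Measurable (birkhoffSum f φ n) :=
  Finset.measurable_sum _ fun k _ => hφ.comp (hf.iterate k)

theorem measurable_birkhoffAverage (hf : Measurable f) (hφ : Measurable φ) (n : ℕ) :
    Measurable (birkhoffAverage ℝ f φ n) :=
  (measurable_birkhoffSum hf hφ n).const_smul (n : ℝ)⁻¹

end BirkhoffAverage

section MaximalErgodic

variable {α : Type*} {f : α → α} {ψ : α → ℝ}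

/-- `maxBirkhoffSum f ψ N = max 0 (max_{1 ≤ n ≤ N} birkhoffSum f ψ n)`, in the recursive form
used in Garsia's proof. -/
noncomputable def maxBirkhoffSum (f : α → α) (ψ : α → ℝ) : ℕ → α → ℝ
  | 0 => 0
  | N + 1 => fun x => max 0 (ψ x + maxBirkhoffSum f ψ N (f x))

theorem maxBirkhoffSum_nonneg (N : ℕ) (x : α) : 0 ≤ maxBirkhoffSum f ψ N x := by
  cases N with
  | zero => exact le_rfl
  | succ N => exact le_max_left _ _

theorem maxBirkhoffSum_le_succ (N : ℕ) (x : α) :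
    maxBirkhoffSum f ψ N x ≤ maxBirkhoffSum f ψ (N + 1) x := by
  induction N generalizing x with
  | zero => exact maxBirkhoffSum_nonneg 1 x
  | succ N ih => exact max_le_max le_rfl (add_le_add le_rfl (ih (f x)))

theorem monotone_maxBirkhoffSum (x : α) : Monotone (maxBirkhoffSum f ψ · x) :=
  monotone_nat_of_le_succ fun N => maxBirkhoffSum_le_succ N x

theorem birkhoffSum_le_maxBirkhoffSum (n : ℕ) (x : α) :
    birkhoffSum f ψ n x ≤ maxBirkhoffSum f ψ n x := by
  induction n generalizing x with
  | zero => exact le_rfl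
  | succ n ih =>
    rw [birkhoffSum_succ']
    exact le_max_of_le_right (add_le_add le_rfl (ih (f x)))

theorem exists_birkhoffSum_eq_maxBirkhoffSum (N : ℕ) (x : α) :
    ∃ n, birkhoffSum f ψ n x = maxBirkhoffSum f ψ N x := by
  induction N generalizing x with
  | zero => exact ⟨0, rfl⟩
  | succ N ih =>
    obtain ⟨n, hn⟩ := ih (f x)
    rcases le_total (ψ x + maxBirkhoffSum f ψ N (f x)) 0 with h | h
    · exact ⟨0, (max_eq_left h).symm⟩
    · exact ⟨n + 1, by rw [birkhoffSum_succ', hn]; exact (max_eq_right h).symm⟩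

theorem setOf_exists_birkhoffSum_pos :
    {x | ∃ n, 0 < birkhoffSum f ψ n x} = ⋃ N, {x | 0 < maxBirkhoffSum f ψ (N + 1) x} := by
  ext x
  simp only [Set.mem_ofPred_eq, Set.mem_iUnion]
  constructor
  · rintro ⟨n, hn⟩
    exact ⟨n, hn.trans_le ((birkhoffSum_le_maxBirkhoffSum n x).trans
      (maxBirkhoffSum_le_succ n x))⟩
  · rintro ⟨N, hN⟩
    obtain ⟨n, hn⟩ := exists_birkhoffSum_eq_maxBirkhoffSum (f := f) (ψ := ψ) (N + 1) x
    exact ⟨n, hn ▸ hN⟩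

variable [MeasurableSpace α] {μ : Measure α}

theorem measurable_maxBirkhoffSum (hf : Measurable f) (hψ : Measurable ψ) (N : ℕ) :
    Measurable (maxBirkhoffSum f ψ N) := by
  induction N with
  | zero => exact measurable_const
  | succ N ih => exact measurable_const.max (hψ.add (ih.comp hf))

namespace MeasureTheory.MeasurePreserving

theorem integral_comp_of_aestronglyMeasurable {E : Type*} [NormedAddCommGroup E]
    [NormedSpace ℝ E] {g : α → E} (hf : MeasurePreserving f μ μ)
    (hg : AEStronglyMeasurable g μ) : ∫ x, g (f x) ∂μ = ∫ x, g x ∂μ := by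
  rw [← integral_map hf.aemeasurable (by rwa [hf.map_eq]), hf.map_eq]

theorem integrable_maxBirkhoffSum (hf : MeasurePreserving f μ μ)
    (hψ : Integrable ψ μ) (N : ℕ) : Integrable (maxBirkhoffSum f ψ N) μ := by
  induction N with
  | zero => exact integrable_zero _ _ _
  | succ N ih => exact (integrable_zero _ _ _).sup (hψ.add (hf.integrable_comp_of_integrable ih))

/-- On `{0 < maxBirkhoffSum f ψ (N + 1)}` the recursion reads
`ψ = maxBirkhoffSum f ψ (N + 1) - maxBirkhoffSum f ψ N ∘ f`, a function whose integral over the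
whole space is nonnegative and which is nonpositive off that set. -/
theorem setIntegral_maxBirkhoffSum_pos_nonneg (hf : MeasurePreserving f μ μ) (hψm : Measurable ψ)
    (hψ : Integrable ψ μ) (N : ℕ) :
    0 ≤ ∫ x in {x | 0 < maxBirkhoffSum f ψ (N + 1) x}, ψ x ∂μ := by
  set E := {x | 0 < maxBirkhoffSum f ψ (N + 1) x}
  set g := fun x => maxBirkhoffSum f ψ (N + 1) x - maxBirkhoffSum f ψ N (f x)
  have hE : MeasurableSet E :=
    measurableSet_lt measurable_const (measurable_maxBirkhoffSum hf.measurable hψm _)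
  have hΦ := hf.integrable_maxBirkhoffSum hψ
  have hΦf : Integrable (fun x => maxBirkhoffSum f ψ N (f x)) μ :=
    hf.integrable_comp_of_integrable (hΦ N)
  have hg : Integrable g μ := (hΦ _).sub hΦf
  have hg_int : 0 ≤ ∫ x, g x ∂μ := by
    rw [integral_sub (hΦ _) hΦf,
      hf.integral_comp_of_aestronglyMeasurable (hΦ N).aestronglyMeasurable, sub_nonneg]
    exact integral_mono (hΦ _) (hΦ _) (maxBirkhoffSum_le_succ N)
  have hg_compl : ∫ x in Eᶜ, g x ∂μ ≤ 0 := by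
    refine setIntegral_nonpos hE.compl fun x hx => ?_
    have : maxBirkhoffSum f ψ (N + 1) x = 0 :=
      (not_lt.1 (by exact hx)).antisymm (maxBirkhoffSum_nonneg _ _)
    simp only [g, this, zero_sub, neg_nonpos]
    exact maxBirkhoffSum_nonneg _ _
  have hg_E : ∫ x in E, g x ∂μ = ∫ x in E, ψ x ∂μ := by
    refine setIntegral_congr_fun hE fun x hx => ?_
    have : maxBirkhoffSum f ψ (N + 1) x = ψ x + maxBirkhoffSum f ψ N (f x) :=
      max_eq_right_of_lt ((lt_max_iff.1 hx).resolve_left (lt_irrefl 0))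
    simp only [g, this, add_sub_cancel_right]
  linarith [integral_add_compl hE hg]

/-- **Maximal ergodic theorem** (Garsia). -/
theorem setIntegral_exists_birkhoffSum_pos_nonneg
    (hf : MeasurePreserving f μ μ) (hψm : Measurable ψ) (hψ : Integrable ψ μ) :
    0 ≤ ∫ x in {x | ∃ n, 0 < birkhoffSum f ψ n x}, ψ x ∂μ := by
  rw [setOf_exists_birkhoffSum_pos]
  refine ge_of_tendsto' (tendsto_setIntegral_of_monotone (fun N => ?_) (fun M N hMN x hx => ?_)
    hψ.integrableOn) (hf.setIntegral_maxBirkhoffSum_pos_nonneg hψm hψ)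
  · exact measurableSet_lt measurable_const (measurable_maxBirkhoffSum hf.measurable hψm _)
  · exact hx.trans_le (monotone_maxBirkhoffSum x (Nat.succ_le_succ hMN))

end MeasureTheory.MeasurePreserving

end MaximalErgodic

theorem integrable_of_abs_le {α : Type*} [MeasurableSpace α] {μ : Measure α} [IsFiniteMeasure μ]
    {φ : α → ℝ} {C : ℝ} (hφ : Measurable φ) (hC : ∀ x, |φ x| ≤ C) : Integrable φ μ :=
  .of_bound hφ.aestronglyMeasurable C (ae_of_all _ hC)

section PointwiseErgodic

variable {α : Type*} [MeasurableSpace α] {μ : Measure α} [IsProbabilityMeasure μ]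
  {f : α → α} {φ : α → ℝ} {C : ℝ}

/-- The upper limit of the averages is an invariant function, hence a.e. equal to a constant `c`;
if `c > ∫ φ`, then for `∫ φ < t < c` almost every point has a positive Birkhoff sum of `φ - t`, and
the maximal ergodic theorem forces `∫ (φ - t) ≥ 0`. -/
theorem Ergodic.ae_limsup_birkhoffAverage_le (hE : Ergodic f μ) (hφ : Measurable φ)
    (hC : ∀ x, |φ x| ≤ C) :
    ∀ᵐ x ∂μ, limsup (birkhoffAverage ℝ f φ · x) atTop ≤ ∫ x, φ x ∂μ := by
  obtain ⟨c, hc⟩ := hE.ae_eq_const_of_ae_eq_comp_ae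
    (Measurable.limsup (measurable_birkhoffAverage hE.measurable hφ)).aestronglyMeasurable
    (Eventually.of_forall fun x => limsup_birkhoffAverage_apply hC x)
  suffices c ≤ ∫ x, φ x ∂μ from hc.mono fun x hx => hx.trans_le this
  by_contra! hlt
  obtain ⟨t, hφt, htc⟩ := exists_between hlt
  have hpos : ∀ᵐ x ∂μ, x ∈ {x | ∃ n, 0 < birkhoffSum f (fun y => φ y - t) n x} :=
    hc.mono fun x hx => exists_birkhoffSum_sub_pos_of_lt_limsup hC (htc.trans_eq hx.symm)
  have hint := hE.toMeasurePreserving.setIntegral_exists_birkhoffSum_pos_nonneg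
    (hφ.sub_const t) ((integrable_of_abs_le hφ hC).sub (integrable_const t))
  rw [Measure.restrict_eq_self_of_ae_mem hpos, integral_sub (integrable_of_abs_le hφ hC)
    (integrable_const t), integral_const, probReal_univ, one_smul] at hint
  linarith

theorem Ergodic.ae_tendsto_birkhoffAverage (hE : Ergodic f μ) (hφ : Measurable φ)
    (hC : ∀ x, |φ x| ≤ C) :
    ∀ᵐ x ∂μ, Tendsto (birkhoffAverage ℝ f φ · x) atTop (𝓝 (∫ x, φ x ∂μ)) := by
  have hC' : ∀ x, |(-φ) x| ≤ C := by simpa using hC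
  filter_upwards [hE.ae_limsup_birkhoffAverage_le hφ hC,
    hE.ae_limsup_birkhoffAverage_le hφ.neg hC'] with x hup hlow
  simp only [Pi.neg_apply, integral_neg] at hlow
  refine tendsto_order.2 ⟨fun a ha => ?_, fun b hb =>
    eventually_lt_of_limsup_lt (hup.trans_lt hb) (isBoundedUnder_le_birkhoffAverage hC x)⟩
  exact (eventually_lt_of_limsup_lt (hlow.trans_lt (neg_lt_neg ha))
    (isBoundedUnder_le_birkhoffAverage hC' x)).mono fun n hn => by
      simpa [birkhoffAverage_neg] using hn

theorem Ergodic.measure_birkhoffGe_eq_one_or_measure_birkhoffLe_eq_one (hE : Ergodic f μ)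
    (hφ : Measurable φ) (hC : ∀ x, |φ x| ≤ C) (a : ℝ) :
    μ (birkhoffGe f φ a) = 1 ∨ μ (birkhoffLe f φ a) = 1 := by
  have hlim := hE.ae_tendsto_birkhoffAverage hφ hC
  have measure_eq_one {s : Set α} (h : ∀ᵐ x ∂μ, x ∈ s) : μ s = 1 := by
    rw [← measure_univ (μ := μ)]
    exact measure_congr (ae_eq_univ.2 h)
  rw [birkhoffGe_eq, birkhoffLe_eq]
  rcases le_total a (∫ x, φ x ∂μ) with ha | ha
  · exact .inl (measure_eq_one (hlim.mono fun x hx => ⟨_, ha, hx⟩))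
  · exact .inr (measure_eq_one (hlim.mono fun x hx => ⟨_, ha, hx⟩))

end PointwiseErgodic

theorem ENNReal.one_le_or_one_le_of_forall_ofReal_one_sub_le {a b : ℝ≥0∞}
    (h : ∀ ε : ℚ, 0 < ε → ENNReal.ofReal (1 - ε) ≤ a ∨ ENNReal.ofReal (1 - ε) ≤ b) :
    1 ≤ a ∨ 1 ≤ b := by
  by_contra! hab
  obtain ⟨q, -, hq, hq1⟩ := ENNReal.lt_iff_exists_rat_btwn.1 (max_lt hab.1 hab.2)
  have hε : ENNReal.ofReal (1 - ((1 - q : ℚ) : ℝ)) = ENNReal.ofReal q := by push_cast; ring_nf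
  have hq1' : q < 1 := by exact_mod_cast (ENNReal.ofReal_lt_one.1 hq1)
  rcases h (1 - q) (sub_pos.2 hq1') with h' | h' <;> rw [hε] at h'
  · exact not_lt.2 (h'.trans (le_max_left a b)) hq
  · exact not_lt.2 (h'.trans (le_max_right a b)) hq

theorem Filter.exists_eventuallyEq_const_of_forall_rat {α : Type*} {l : Filter α}
    [CountableInterFilter l] {g : α → ℝ}
    (h : ∀ q : ℚ, (∀ᶠ x in l, (q : ℝ) ≤ g x) ∨ ∀ᶠ x in l, g x ≤ q) :
    ∃ c, g =ᶠ[l] fun _ => c := by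
  rcases l.eq_or_neBot with rfl | _
  · exact ⟨0, eventually_bot⟩
  set S := {q : ℚ | ∀ᶠ x in l, (q : ℝ) ≤ g x}
  have hS : ∀ᶠ x in l, ∀ q : ℚ, (q ∈ S → (q : ℝ) ≤ g x) ∧ (q ∉ S → g x ≤ q) := by
    refine eventually_countable_forall.2 fun q => ?_
    by_cases hq : q ∈ S
    · exact (show ∀ᶠ x in l, (q : ℝ) ≤ g x from hq).mono fun x hx => ⟨fun _ => hx, absurd hq⟩
    · exact ((h q).resolve_left hq).mono fun x hx => ⟨fun hq' => absurd hq' hq, fun _ => hx⟩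
  obtain ⟨x₀, hx₀⟩ := hS.exists
  have hbdd : BddAbove (((↑) : ℚ → ℝ) '' S) :=
    ⟨g x₀, by rintro _ ⟨q, hq, rfl⟩; exact (hx₀ q).1 hq⟩
  have hne : (((↑) : ℚ → ℝ) '' S).Nonempty := by
    obtain ⟨q, hq⟩ := exists_rat_lt (g x₀)
    exact ⟨q, q, by_contra fun hq' => not_lt.2 ((hx₀ q).2 hq') hq, rfl⟩
  refine ⟨sSup (((↑) : ℚ → ℝ) '' S), hS.mono fun x hx => le_antisymm ?_ ?_⟩
  · by_contra! hlt
    obtain ⟨q, hcq, hqx⟩ := exists_rat_btwn hlt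
    have hq : q ∉ S := fun hq => not_lt.2 (le_csSup hbdd ⟨q, hq, rfl⟩) hcq
    exact not_lt.2 ((hx q).2 hq) hqx
  · exact csSup_le hne (by rintro _ ⟨q, hq, rfl⟩; exact (hx q).1 hq)

section Convergence

variable {α : Type*} [MeasurableSpace α] {μ : Measure α} {f : α → α} {φ : α → ℝ} {C : ℝ}

theorem measurableSet_exists_tendsto_birkhoffAverage (hf : Measurable f) (hφ : Measurable φ) :
    MeasurableSet {x | ∃ L, Tendsto (birkhoffAverage ℝ f φ · x) atTop (𝓝 L)} :=
  StronglyMeasurable.measurableSet_exists_tendsto fun n =>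
    (measurable_birkhoffAverage hf hφ n).stronglyMeasurable

theorem measurableSet_birkhoffGe (hf : Measurable f) (hφ : Measurable φ) (a : ℝ) :
    MeasurableSet (birkhoffGe f φ a) := by
  rw [birkhoffGe_eq_inter]
  exact (measurableSet_exists_tendsto_birkhoffAverage hf hφ).inter
    (measurableSet_le measurable_const (.limsup (measurable_birkhoffAverage hf hφ)))

theorem measurableSet_birkhoffLe (hf : Measurable f) (hφ : Measurable φ) (a : ℝ) :
    MeasurableSet (birkhoffLe f φ a) := by
  rw [birkhoffLe_eq_inter]
  exact (measurableSet_exists_tendsto_birkhoffAverage hf hφ).inter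
    (measurableSet_le (.limsup (measurable_birkhoffAverage hf hφ)) measurable_const)

theorem exists_ae_tendsto_birkhoffAverage_of_forall_rat [IsProbabilityMeasure μ]
    (hf : Measurable f) (hφ : Measurable φ)
    (h : ∀ a : ℚ, μ (birkhoffGe f φ a) = 1 ∨ μ (birkhoffLe f φ a) = 1) :
    ∃ c, ∀ᵐ x ∂μ, Tendsto (birkhoffAverage ℝ f φ · x) atTop (𝓝 c) := by
  have hae (a : ℚ) : (∀ᵐ x ∂μ, x ∈ birkhoffGe f φ a) ∨ ∀ᵐ x ∂μ, x ∈ birkhoffLe f φ a :=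
    (h a).imp (mem_ae_iff_prob_eq_one (measurableSet_birkhoffGe hf hφ a)).2
      (mem_ae_iff_prob_eq_one (measurableSet_birkhoffLe hf hφ a)).2
  have hlim : ∀ᵐ x ∂μ, ∃ L, Tendsto (birkhoffAverage ℝ f φ · x) atTop (𝓝 L) := by
    rcases hae 0 with h0 | h0
    · exact h0.mono fun x hx => by rw [birkhoffGe_eq_inter] at hx; exact hx.1
    · exact h0.mono fun x hx => by rw [birkhoffLe_eq_inter] at hx; exact hx.1
  obtain ⟨c, hc⟩ := Filter.exists_eventuallyEq_const_of_forall_rat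
    (g := fun x => limsup (birkhoffAverage ℝ f φ · x) atTop) fun q => (hae q).imp
      (fun h' => h'.mono fun x hx => by rw [birkhoffGe_eq_inter] at hx; exact hx.2)
      (fun h' => h'.mono fun x hx => by rw [birkhoffLe_eq_inter] at hx; exact hx.2)
  refine ⟨c, (hlim.and hc).mono fun x ⟨⟨L, hL⟩, hx⟩ => ?_⟩
  rwa [← show L = c from hL.limsup_eq.symm.trans hx]

namespace MeasureTheory.MeasurePreserving

theorem integral_birkhoffSum (hf : MeasurePreserving f μ μ)
    (hφ : Integrable φ μ) (n : ℕ) : ∫ x, birkhoffSum f φ n x ∂μ = n * ∫ x, φ x ∂μ := by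
  have hint : ∀ k ∈ Finset.range n, Integrable (fun x => φ (f^[k] x)) μ :=
    fun k _ => (hf.iterate k).integrable_comp_of_integrable hφ
  simp only [birkhoffSum]
  rw [integral_finsetSum _ hint]
  simp [fun k => (hf.iterate k).integral_comp_of_aestronglyMeasurable hφ.aestronglyMeasurable]

theorem integral_eq_of_ae_tendsto_birkhoffAverage
    [IsFiniteMeasure μ] (hf : MeasurePreserving f μ μ) (hφ : Measurable φ) (hC : ∀ x, |φ x| ≤ C)
    {c : ℝ} (hc : ∀ᵐ x ∂μ, Tendsto (birkhoffAverage ℝ f φ · x) atTop (𝓝 c)) :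
    ∫ x, φ x ∂μ = μ.real Set.univ * c := by
  have hconst : ∀ᶠ n in atTop, ∫ x, birkhoffAverage ℝ f φ n x ∂μ = ∫ x, φ x ∂μ := by
    filter_upwards [eventually_ne_atTop 0] with n hn
    simp only [birkhoffAverage, smul_eq_mul]
    rw [integral_const_mul, hf.integral_birkhoffSum (integrable_of_abs_le hφ hC),
      inv_mul_cancel_left₀ (Nat.cast_ne_zero.2 hn)]
  have hlim := tendsto_integral_of_dominated_convergence (fun _ => C)
    (fun n => (measurable_birkhoffAverage hf.measurable hφ n).aestronglyMeasurable)
    (integrable_const C) (fun n => ae_of_all _ (abs_birkhoffAverage_le hC n)) hc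
  rw [integral_const, smul_eq_mul] at hlim
  exact tendsto_nhds_unique (tendsto_const_nhds.congr' (hconst.mono fun _ h => h.symm)) hlim

theorem setIntegral_eq_measureReal_mul_integral
    [IsProbabilityMeasure μ] (hf : MeasurePreserving f μ μ) (hφ : Measurable φ)
    (hC : ∀ x, |φ x| ≤ C) {c : ℝ}
    (hc : ∀ᵐ x ∂μ, Tendsto (birkhoffAverage ℝ f φ · x) atTop (𝓝 c)) {s : Set α}
    (hs : MeasurableSet s) (hinv : f ⁻¹' s = s) :
    ∫ x in s, φ x ∂μ = μ.real s * ∫ x, φ x ∂μ := by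
  have hf_s : MeasurePreserving f (μ.restrict s) (μ.restrict s) := by
    simpa only [hinv] using hf.restrict_preimage hs
  rw [hf_s.integral_eq_of_ae_tendsto_birkhoffAverage hφ hC (ae_restrict_of_ae hc),
    hf.integral_eq_of_ae_tendsto_birkhoffAverage hφ hC hc, measureReal_restrict_apply_univ,
    probReal_univ, one_mul]

end MeasureTheory.MeasurePreserving

end Convergence

section Density

variable {M : Type*} [MetricSpace M] [CompactSpace M] [MeasurableSpace M] [BorelSpace M]
  {μ : Measure M} [IsFiniteMeasure μ]

theorem ContinuousMap.continuous_integral (μ : Measure M) [IsFiniteMeasure μ] :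
    Continuous fun φ : C(M, ℝ) => ∫ x, φ x ∂μ :=
  (MeasureTheory.continuous_integral.comp (toLp (E := ℝ) 1 μ ℝ).continuous).congr fun φ =>
    integral_congr_ae (coeFn_toLp μ φ)

theorem MeasureTheory.Measure.restrict_eq_smul_of_dense {D : Set C(M, ℝ)} (hD : Dense D)
    {s : Set M} (h : ∀ φ ∈ D, ∫ x in s, φ x ∂μ = μ.real s * ∫ x, φ x ∂μ) :
    μ.restrict s = μ s • μ := by
  have hall : ∀ φ : C(M, ℝ), ∫ x in s, φ x ∂μ = μ.real s * ∫ x, φ x ∂μ :=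
    hD.induction h (isClosed_eq (ContinuousMap.continuous_integral _)
      ((ContinuousMap.continuous_integral μ).const_mul _))
  have := μ.smul_finite (measure_ne_top μ s)
  refine ext_of_forall_integral_eq_of_IsFiniteMeasure fun g => ?_
  rw [integral_smul_measure, smul_eq_mul]
  exact hall g.toContinuousMap

end Density

theorem eventuallyConst_ae_of_restrict_eq_smul {α : Type*} [MeasurableSpace α] {μ : Measure α}
    [IsProbabilityMeasure μ] {s : Set α} (hs : MeasurableSet s) (h : μ.restrict s = μ s • μ) :
    EventuallyConst s (ae μ) := by
  have hidem : μ.real s * μ.real s = μ.real s := by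
    simpa [Measure.real] using (congrArg (fun ν : Measure α => ν.real s) h).symm
  rcases IsIdempotentElem.iff_eq_zero_or_one.1 hidem with h0 | h1
  · exact eventuallyConst_set'.2 (.inl (ae_eq_empty.2 ((measureReal_eq_zero_iff).1 h0)))
  · refine eventuallyConst_set'.2 (.inr ((ae_eq_univ_iff_measure_eq hs.nullMeasurableSet).2 ?_))
    rw [measure_univ]
    exact (ENNReal.toReal_eq_one_iff (μ s)).1 h1

theorem ergodic_iff_mem_all_G_general {M : Type*} [MetricSpace M] [CompactSpace M]
    [MeasurableSpace M] [BorelSpace M] (m : Measure M) [IsProbabilityMeasure m]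
    (f : M → M) (hf : MeasurePreserving f m m)
    (D : Set C(M, ℝ)) (hDdense : Dense D) :
    Ergodic f m ↔
      ∀ φ ∈ D, ∀ a ε : ℚ, 0 < ε →
        (ENNReal.ofReal (1 - (ε : ℝ)) ≤ m (birkhoffGe f (⇑φ) (a : ℝ)) ∨
         ENNReal.ofReal (1 - (ε : ℝ)) ≤ m (birkhoffLe f (⇑φ) (a : ℝ))) := by
  have hbound (φ : C(M, ℝ)) (x : M) : |φ x| ≤ ‖φ‖ := φ.norm_coe_le_norm x
  refine ⟨fun hE φ _ a ε hε => ?_, fun hG => ⟨hf, ⟨fun s hs hinv => ?_⟩⟩⟩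
  · have hle : ENNReal.ofReal (1 - ε) ≤ 1 := ENNReal.ofReal_le_one.2 (by simp [hε.le])
    rcases hE.measure_birkhoffGe_eq_one_or_measure_birkhoffLe_eq_one φ.continuous.measurable
      (hbound φ) a with h | h
    · exact .inl (h ▸ hle)
    · exact .inr (h ▸ hle)
  · have hD : ∀ φ ∈ D, ∫ x in s, φ x ∂m = m.real s * ∫ x, φ x ∂m := by
      intro φ hφ
      have hfull (a : ℚ) : m (birkhoffGe f φ a) = 1 ∨ m (birkhoffLe f φ a) = 1 :=
        (ENNReal.one_le_or_one_le_of_forall_ofReal_one_sub_le (hG φ hφ a)).imp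
          prob_le_one.antisymm prob_le_one.antisymm
      obtain ⟨c, hc⟩ := exists_ae_tendsto_birkhoffAverage_of_forall_rat hf.measurable
        φ.continuous.measurable hfull
      exact hf.setIntegral_eq_measureReal_mul_integral φ.continuous.measurable (hbound φ) hc hs
        hinv
    exact eventuallyConst_ae_of_restrict_eq_smul hs
      (Measure.restrict_eq_smul_of_dense hDdense hD)

/-- A measure-preserving map `f` is ergodic if and only if it belongs to all the sets
`G(φ, a, ε)` — i.e. for each `φ` in a countable dense subset `D` of `C⁰(M,ℝ)`, each
rational `a` and each positive rational `ε`, either `m[φ_f ≥ a] ≥ 1 − ε` or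
`m[φ_f ≤ a] ≥ 1 − ε`. -/
theorem ergodic_iff_mem_all_G {M : Type*} [MetricSpace M] [CompactSpace M]
    [MeasurableSpace M] [BorelSpace M] (m : Measure M) [IsProbabilityMeasure m]
    (f : M → M) (hf : MeasurePreserving f m m)
    (D : Set C(M, ℝ)) (hDcount : D.Countable) (hDdense : Dense D) :
    Ergodic f m ↔
      ∀ φ ∈ D, ∀ a ε : ℚ, 0 < ε →
        (ENNReal.ofReal (1 - (ε : ℝ)) ≤ m (birkhoffGe f (⇑φ) (a : ℝ)) ∨
         ENNReal.ofReal (1 - (ε : ℝ)) ≤ m (birkhoffLe f (⇑φ) (a : ℝ))) :=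
  ergodic_iff_mem_all_G_general m f hf D hDdense
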